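/- arXiv:1604.07016 — 2 statements merged into one kernel-verified Lean document; each statement's English description precedes it below -/
import Mathlib

section
/- Let G be a finite simple graph with a proper vertex ordering <, let M be a uniquely restricted matching in G starting with an edge e' ∈ E(G), and let e ∈ E(G) be an edge such that r(e) < l(e') and {e, e'} is a uniquely restricted matching in G. Then {e} ∪ M is a uniquely restricted matching in G starting with e. -/
/-- The set of vertices matched by a set of edges `M`. -/
def matchedVerts {V : Type*} (M : Set (Sym2 V)) : Set V := {v | ∃ e ∈ M, v ∈ e}

/-- `M` is a matching in the simple graph `G`: a set of edges of `G` no two of which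
share an endpoint. -/
def IsMatchingSet {V : Type*} (G : SimpleGraph V) (M : Set (Sym2 V)) : Prop :=
  M ⊆ G.edgeSet ∧ ∀ e ∈ M, ∀ f ∈ M, e ≠ f → ∀ v : V, v ∈ e → v ∉ f

/-- `M` is a uniquely restricted matching in `G`: a matching such that no other matching
of `G` matches exactly the same set of vertices. -/
def UniquelyRestricted {V : Type*} (G : SimpleGraph V) (M : Set (Sym2 V)) : Prop :=
  IsMatchingSet G M ∧
    ∀ M' : Set (Sym2 V), IsMatchingSet G M' → matchedVerts M' = matchedVerts M → M' = M

/-- The smaller endpoint `l(e)` of an edge `e`. -/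
def eL {V : Type*} [LinearOrder V] (e : Sym2 V) : V :=
  Sym2.lift ⟨fun a b => min a b, fun a b => min_comm a b⟩ e

/-- The larger endpoint `r(e)` of an edge `e`. -/
def eR {V : Type*} [LinearOrder V] (e : Sym2 V) : V :=
  Sym2.lift ⟨fun a b => max a b, fun a b => max_comm a b⟩ e

/-- The linear order on `V` is a proper vertex ordering of `G`:
for `u < v < w`, `uw ∈ E(G)` implies `uv ∈ E(G)` and `vw ∈ E(G)`. -/
def IsProperOrdering {V : Type*} [LinearOrder V] (G : SimpleGraph V) : Prop :=
  ∀ u v w : V, u < v → v < w → G.Adj u w → G.Adj u v ∧ G.Adj v w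

/-- The linear order on `V` is a transitive vertex ordering of `G`. -/
def IsTransitiveOrdering {V : Type*} [LinearOrder V] (G : SimpleGraph V) : Prop :=
  ∀ u v w : V, u < v → v < w →
    ((G.Adj u v → G.Adj v w → G.Adj u w) ∧ (G.Adj u w → G.Adj u v ∨ G.Adj v w))

/-- There is an alternating cycle of length 4 with respect to `M` in `G`. -/
def HasAltC4 {V : Type*} (G : SimpleGraph V) (M : Set (Sym2 V)) : Prop :=
  ∃ u v u' v' : V, u ≠ v ∧ u ≠ u' ∧ u ≠ v' ∧ v ≠ u' ∧ v ≠ v' ∧ u' ≠ v' ∧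
    s(u, v) ∈ M ∧ s(u', v') ∈ M ∧ G.Adj u u' ∧ G.Adj v v'

/-- `G` admits an interval representation by nonempty closed real intervals. -/
def HasIntervalRep {V : Type*} (G : SimpleGraph V) : Prop :=
  ∃ a b : V → ℝ, (∀ v, a v ≤ b v) ∧
    ∀ u v : V, u ≠ v →
      (G.Adj u v ↔ (Set.Icc (a u) (b u) ∩ Set.Icc (a v) (b v)).Nonempty)

/-- The matching `M` starts with the edge `e`. -/
def StartsWith {V : Type*} [LinearOrder V] (M : Set (Sym2 V)) (e : Sym2 V) : Prop :=
  e ∈ M ∧ ∀ f ∈ M, f ≠ e → eL e < eL f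


section Helpers

variable {V : Type*}

lemma mv_iff {M : Set (Sym2 V)} {v : V} : v ∈ matchedVerts M ↔ ∃ e ∈ M, v ∈ e := Iff.rfl

lemma matching_subset {G : SimpleGraph V} {A B : Set (Sym2 V)} (hB : IsMatchingSet G B)
    (h : A ⊆ B) : IsMatchingSet G A :=
  ⟨h.trans hB.1, fun e he f hf => hB.2 e (h he) f (h hf)⟩

lemma mv_diff_singleton {G : SimpleGraph V} {M : Set (Sym2 V)} (hM : IsMatchingSet G M)
    {e : Sym2 V} (he : e ∈ M) :
    matchedVerts (M \ {e}) = matchedVerts M \ {v | v ∈ e} := by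
  ext v
  constructor
  · rintro ⟨f, ⟨hfM, hfe⟩, hvf⟩
    exact ⟨⟨f, hfM, hvf⟩, hM.2 f hfM e he (by simpa using hfe) v hvf⟩
  · rintro ⟨⟨f, hfM, hvf⟩, hve⟩
    exact ⟨f, ⟨hfM, fun h => hve (by simp only [Set.mem_singleton_iff] at h; exact h ▸ hvf)⟩, hvf⟩

section Ord
variable [LinearOrder V]

@[simp] lemma eL_mk (a b : V) : eL s(a, b) = min a b := rfl
@[simp] lemma eR_mk (a b : V) : eR s(a, b) = max a b := rfl

lemma mk_eL_eR (e : Sym2 V) : s(eL e, eR e) = e := by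
  induction e using Sym2.inductionOn with
  | hf a b =>
    rcases le_total a b with h | h
    · simp [min_eq_left h, max_eq_right h]
    · simp only [eL_mk, eR_mk, min_eq_right h, max_eq_left h]
      exact Sym2.eq_swap

lemma eL_le_eR (e : Sym2 V) : eL e ≤ eR e := by
  induction e using Sym2.inductionOn with
  | hf a b => exact min_le_max

lemma mem_edge_iff {v : V} {e : Sym2 V} : v ∈ e ↔ v = eL e ∨ v = eR e := by
  conv_lhs => rw [← mk_eL_eR e]
  exact Sym2.mem_iff

lemma eL_mem (e : Sym2 V) : eL e ∈ e := mem_edge_iff.2 (Or.inl rfl)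
lemma eR_mem (e : Sym2 V) : eR e ∈ e := mem_edge_iff.2 (Or.inr rfl)

lemma adj_of_edge {G : SimpleGraph V} {e : Sym2 V} (he : e ∈ G.edgeSet) :
    G.Adj (eL e) (eR e) := by
  rw [← SimpleGraph.mem_edgeSet, mk_eL_eR]; exact he

lemma edge_lt {G : SimpleGraph V} {e : Sym2 V} (he : e ∈ G.edgeSet) : eL e < eR e :=
  lt_of_le_of_ne (eL_le_eR e) (adj_of_edge he).ne

end Ord

/-- Swap two matching edges for two other edges on the same vertex set. -/
lemma swap_matching {G : SimpleGraph V} {N : Set (Sym2 V)} (hN : IsMatchingSet G N)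
    {f g a b : Sym2 V} (hf : f ∈ N) (hg : g ∈ N)
    (ha : a ∈ G.edgeSet) (hb : b ∈ G.edgeSet) (hab : ∀ z, z ∈ a → z ∉ b)
    (hcover : ∀ z : V, (z ∈ a ∨ z ∈ b) ↔ (z ∈ f ∨ z ∈ g)) :
    IsMatchingSet G ((N \ {f, g}) ∪ {a, b}) ∧
      matchedVerts ((N \ {f, g}) ∪ {a, b}) = matchedVerts N := by
  have hmem : ∀ c : Sym2 V, c ∈ (N \ {f, g}) ∪ {a, b} ↔
      (c ∈ N ∧ c ≠ f ∧ c ≠ g) ∨ (c = a ∨ c = b) := by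
    intro c
    simp only [Set.mem_union, Set.mem_diff, Set.mem_insert_iff, Set.mem_singleton_iff, not_or]
  -- a vertex of an old edge is not in a (or b)
  have key : ∀ c ∈ N, c ≠ f → c ≠ g → ∀ z ∈ c, ¬(z ∈ a ∨ z ∈ b) := by
    intro c hc hcf hcg z hzc hz
    rcases (hcover z).1 hz with hzf | hzg
    · exact hN.2 c hc f hf hcf z hzc hzf
    · exact hN.2 c hc g hg hcg z hzc hzg
  have hab' : a ≠ b := by
    intro h
    exact hab a.out.1 (Sym2.out_fst_mem a) (h ▸ Sym2.out_fst_mem a)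
  constructor
  constructor
  · intro c hc
    rcases (hmem c).1 hc with ⟨hcN, _, _⟩ | (rfl | rfl)
    · exact hN.1 hcN
    · exact ha
    · exact hb
  · intro c hc d hd hcd z hzc hzd
    rcases (hmem c).1 hc with ⟨hcN, hcf, hcg⟩ | hcab
    · rcases (hmem d).1 hd with ⟨hdN, _, _⟩ | (rfl | rfl)
      · exact hN.2 c hcN d hdN hcd z hzc hzd
      · exact key c hcN hcf hcg z hzc (Or.inl hzd)
      · exact key c hcN hcf hcg z hzc (Or.inr hzd)
    · rcases (hmem d).1 hd with ⟨hdN, hdf, hdg⟩ | hdab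
      · rcases hcab with rfl | rfl
        · exact key d hdN hdf hdg z hzd (Or.inl hzc)
        · exact key d hdN hdf hdg z hzd (Or.inr hzc)
      · rcases hcab with rfl | rfl <;> rcases hdab with rfl | rfl
        · exact hcd rfl
        · exact hab z hzc hzd
        · exact hab z hzd hzc
        · exact hcd rfl
  · ext z
    constructor
    · rintro ⟨c, hc, hzc⟩
      rcases (hmem c).1 hc with ⟨hcN, _, _⟩ | (rfl | rfl)
      · exact ⟨c, hcN, hzc⟩
      · rcases (hcover z).1 (Or.inl hzc) with h | h
        · exact ⟨f, hf, h⟩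
        · exact ⟨g, hg, h⟩
      · rcases (hcover z).1 (Or.inr hzc) with h | h
        · exact ⟨f, hf, h⟩
        · exact ⟨g, hg, h⟩
    · rintro ⟨c, hcN, hzc⟩
      by_cases hcf : c = f
      · rcases (hcover z).2 (Or.inl (hcf ▸ hzc)) with h | h
        · exact ⟨a, (hmem a).2 (Or.inr (Or.inl rfl)), h⟩
        · exact ⟨b, (hmem b).2 (Or.inr (Or.inr rfl)), h⟩
      by_cases hcg : c = g
      · rcases (hcover z).2 (Or.inr (hcg ▸ hzc)) with h | h
        · exact ⟨a, (hmem a).2 (Or.inr (Or.inl rfl)), h⟩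
        · exact ⟨b, (hmem b).2 (Or.inr (Or.inr rfl)), h⟩
      · exact ⟨c, (hmem c).2 (Or.inl ⟨hcN, hcf, hcg⟩), hzc⟩

/-- If a matching with the right vertex set contains `e`, it equals `{e} ∪ M`. -/
lemma extend_of_mem {G : SimpleGraph V} {M M' : Set (Sym2 V)} {e : Sym2 V}
    (hM : UniquelyRestricted G M)
    (hdisj : ∀ v ∈ e, v ∉ matchedVerts M)
    (hM' : IsMatchingSet G M')
    (hverts : matchedVerts M' = matchedVerts ({e} ∪ M))
    (heM' : e ∈ M') : M' = {e} ∪ M := by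
  have h1 : matchedVerts (M' \ {e}) = matchedVerts M := by
    rw [mv_diff_singleton hM' heM', hverts]
    ext z
    constructor
    · rintro ⟨⟨c, hc, hzc⟩, hze⟩
      rcases hc with hc | hc
      · exact absurd hzc (by simpa using fun h => hze ((Set.mem_singleton_iff.1 hc) ▸ h))
      · exact ⟨c, hc, hzc⟩
    · rintro ⟨c, hc, hzc⟩
      exact ⟨⟨c, Or.inr hc, hzc⟩, fun hze => hdisj z hze ⟨c, hc, hzc⟩⟩
  have h2 : M' \ {e} = M :=
    hM.2 (M' \ {e}) (matching_subset hM' Set.diff_subset) h1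
  ext c
  constructor
  · intro hc
    by_cases hce : c = e
    · exact Or.inl (by simpa using hce)
    · exact Or.inr (h2 ▸ ⟨hc, by simpa using hce⟩)
  · rintro (hc | hc)
    · exact (Set.mem_singleton_iff.1 hc) ▸ heM'
    · exact (h2 ▸ hc : c ∈ M' \ {e}).1

end Helpers

theorem stmt6 {V : Type*} [Fintype V] [LinearOrder V] (G : SimpleGraph V)
    (hord : IsProperOrdering G) (M : Set (Sym2 V)) (e e' : Sym2 V)
    (hM : UniquelyRestricted G M) (hstart : StartsWith M e')
    (he : e ∈ G.edgeSet) (hre : eR e < eL e')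
    (hee' : UniquelyRestricted G {e, e'}) :
    UniquelyRestricted G ({e} ∪ M) ∧ StartsWith ({e} ∪ M) e := by
  classical
  set u := eL e with hu
  set v := eR e with hv
  set p := eL e' with hp
  set q := eR e' with hq
  have he'M : e' ∈ M := hstart.1
  have he'E : e' ∈ G.edgeSet := hM.1.1 he'M
  have huv : u < v := edge_lt he
  have hpq : p < q := edge_lt he'E
  have hvp : v < p := hre
  have he_eq : s(u, v) = e := by rw [hu, hv]; exact mk_eL_eR e
  have he'_eq : s(p, q) = e' := by rw [hp, hq]; exact mk_eL_eR e'
  have hmem_e : ∀ z : V, z ∈ e ↔ z = u ∨ z = v := by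
    intro z; rw [← he_eq]; exact Sym2.mem_iff
  have hmem_e' : ∀ z : V, z ∈ e' ↔ z = p ∨ z = q := by
    intro z; rw [← he'_eq]; exact Sym2.mem_iff
  have hlow : ∀ f ∈ M, p ≤ eL f := by
    intro f hf
    by_cases hfe : f = e'
    · subst hfe; exact le_of_eq hp
    · exact le_of_lt (hstart.2 f hf hfe)
  have hmvM : ∀ x ∈ matchedVerts M, p ≤ x := by
    rintro x ⟨f, hf, hxf⟩
    rcases mem_edge_iff.1 hxf with h | h
    · rw [h]; exact hlow f hf
    · rw [h]; exact (hlow f hf).trans (eL_le_eR f)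
  have hdisj : ∀ z ∈ e, z ∉ matchedVerts M := by
    intro z hz hzm
    rcases (hmem_e z).1 hz with rfl | rfl
    · exact absurd (hmvM u hzm) (not_le.2 (huv.trans hvp))
    · exact absurd (hmvM v hzm) (not_le.2 hvp)
  have hmatch : IsMatchingSet G ({e} ∪ M) := by
    constructor
    · rintro f (hf | hf)
      · exact (Set.mem_singleton_iff.1 hf) ▸ he
      · exact hM.1.1 hf
    · rintro f hf g hg hfg z hzf hzg
      rcases hf with hf | hf <;> rcases hg with hg | hg
      · exact hfg ((Set.mem_singleton_iff.1 hf).trans (Set.mem_singleton_iff.1 hg).symm)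
      · rw [Set.mem_singleton_iff] at hf; subst hf
        exact hdisj z hzf ⟨g, hg, hzg⟩
      · rw [Set.mem_singleton_iff] at hg; subst hg
        exact hdisj z hzg ⟨f, hf, hzf⟩
      · exact hM.1.2 f hf g hg hfg z hzf hzg
  have hsw : StartsWith ({e} ∪ M) e := by
    refine ⟨Or.inl rfl, ?_⟩
    rintro f (hf | hf) hne
    · exact absurd (Set.mem_singleton_iff.1 hf) hne
    · have h1 : u < eL f := lt_of_lt_of_le (huv.trans hvp) (hlow f hf)
      exact hu ▸ h1
  refine ⟨⟨hmatch, ?_⟩, hsw⟩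
  intro M' hM' hverts
  by_cases heM' : e ∈ M'
  · exact extend_of_mem hM hdisj hM' hverts heM'
  exfalso
  have humv : u ∈ matchedVerts M' := by
    rw [hverts]; exact ⟨e, Or.inl rfl, (hmem_e u).2 (Or.inl rfl)⟩
  have hvmv : v ∈ matchedVerts M' := by
    rw [hverts]; exact ⟨e, Or.inl rfl, (hmem_e v).2 (Or.inr rfl)⟩
  obtain ⟨f, hfM', huf⟩ := humv
  obtain ⟨w, rfl⟩ := Sym2.mem_iff_exists.mp huf
  obtain ⟨g, hgM', hvg⟩ := hvmv
  obtain ⟨x, rfl⟩ := Sym2.mem_iff_exists.mp hvg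
  have huw : G.Adj u w := G.mem_edgeSet.mp (hM'.1 hfM')
  have hAvx : G.Adj v x := G.mem_edgeSet.mp (hM'.1 hgM')
  have hwv : w ≠ v := by
    rintro rfl
    exact heM' (he_eq ▸ hfM')
  have hxu : x ≠ u := by
    rintro rfl
    have hsw2 : s(v, u) = e := (Sym2.eq_swap).trans he_eq
    exact heM' (hsw2 ▸ hgM')
  have hwmv : w ∈ matchedVerts M := by
    have hw1 : w ∈ matchedVerts ({e} ∪ M) :=
      hverts ▸ ⟨s(u, w), hfM', Sym2.mem_mk_right u w⟩
    rcases hw1 with ⟨c, hc | hc, hwc⟩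
    · rw [Set.mem_singleton_iff] at hc; subst hc
      rcases (hmem_e w).1 hwc with h | h
      · exact absurd h.symm huw.ne
      · exact absurd h hwv
    · exact ⟨c, hc, hwc⟩
  have hxmv : x ∈ matchedVerts M := by
    have hx1 : x ∈ matchedVerts ({e} ∪ M) :=
      hverts ▸ ⟨s(v, x), hgM', Sym2.mem_mk_right v x⟩
    rcases hx1 with ⟨c, hc | hc, hxc⟩
    · rw [Set.mem_singleton_iff] at hc; subst hc
      rcases (hmem_e x).1 hxc with h | h
      · exact absurd h hxu
      · exact absurd h.symm hAvx.ne
    · exact ⟨c, hc, hxc⟩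
  have hvw : v < w := lt_of_lt_of_le hvp (hmvM w hwmv)
  have hvx : v < x := lt_of_lt_of_le hvp (hmvM x hxmv)
  have hux : u < x := huv.trans hvx
  have hfg : s(u, w) ≠ s(v, x) := by
    intro h
    have hv2 : v ∈ s(u, w) := h ▸ Sym2.mem_mk_left v x
    rcases Sym2.mem_iff.1 hv2 with h1 | h1
    · exact absurd h1 huv.ne'
    · exact absurd h1.symm hwv
  have hwx : w ≠ x := by
    rintro rfl
    exact hM'.2 _ hfM' _ hgM' hfg w (Sym2.mem_mk_right u w) (Sym2.mem_mk_right v w)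
  have hAwx : G.Adj w x := by
    rcases lt_or_gt_of_ne hwx with h | h
    · exact (hord v w x hvw h hAvx).2
    · exact ((hord u x w hux h huw).2).symm
  have hne_e_wx : e ≠ s(w, x) := by
    intro h
    have hw2 : w ∈ e := h ▸ Sym2.mem_mk_left w x
    rcases (hmem_e w).1 hw2 with h1 | h1
    · exact absurd h1.symm huw.ne
    · exact absurd h1 hwv
  have hab1 : ∀ z, z ∈ e → z ∉ s(w, x) := by
    intro z hz hz'
    rcases Sym2.mem_iff.1 hz' with h | h
    · exact hdisj z hz (by rw [h]; exact hwmv)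
    · exact hdisj z hz (by rw [h]; exact hxmv)
  have hcov : ∀ z : V, (z ∈ e ∨ z ∈ s(w, x)) ↔ (z ∈ s(u, w) ∨ z ∈ s(v, x)) := by
    intro z
    rw [hmem_e z]
    simp only [Sym2.mem_iff]
    tauto
  obtain ⟨hm2, hv2⟩ :=
    swap_matching hM' hfM' hgM' he (G.mem_edgeSet.mpr hAwx) hab1 hcov
  have heM'' : e ∈ (M' \ {s(u, w), s(v, x)}) ∪ {e, s(w, x)} :=
    Set.mem_union_right _ (Set.mem_insert _ _)
  have hM''eq : (M' \ {s(u, w), s(v, x)}) ∪ {e, s(w, x)} = {e} ∪ M :=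
    extend_of_mem hM hdisj hm2 (hv2.trans hverts) heM''
  have hwxM : s(w, x) ∈ M := by
    have hmem2 : s(w, x) ∈ ({e} ∪ M : Set (Sym2 V)) := by
      rw [← hM''eq]
      exact Set.mem_union_right _ (Set.mem_insert_iff.2 (Or.inr rfl))
    rcases hmem2 with h | h
    · exact absurd (Set.mem_singleton_iff.1 h).symm hne_e_wx
    · exact h
  by_cases hwxe' : s(w, x) = e'
  · -- alternating C4 on {e, e'}
    have hsub : ({s(u, w), s(v, x)} : Set (Sym2 V)) ⊆ M' := by
      intro c hc
      rcases Set.mem_insert_iff.1 hc with h | h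
      · rw [h]; exact hfM'
      · rw [Set.mem_singleton_iff.1 h]; exact hgM'
    have hmfg : IsMatchingSet G {s(u, w), s(v, x)} := matching_subset hM' hsub
    have hverts_fg : matchedVerts {s(u, w), s(v, x)} = matchedVerts {e, e'} := by
      rw [← he_eq, ← hwxe']
      ext z
      simp only [matchedVerts, Set.mem_setOf_eq, Set.mem_insert_iff, Set.mem_singleton_iff,
        exists_eq_or_imp, exists_eq_left, Sym2.mem_iff]
      tauto
    have heq2 := hee'.2 _ hmfg hverts_fg
    have huw_mem : s(u, w) ∈ ({e, e'} : Set (Sym2 V)) := heq2 ▸ Set.mem_insert _ _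
    rcases Set.mem_insert_iff.1 huw_mem with h | h
    · have : w ∈ e := by rw [← h]; exact Sym2.mem_mk_right u w
      rcases (hmem_e w).1 this with h1 | h1
      · exact absurd h1.symm huw.ne
      · exact absurd h1 hwv
    · have : u ∈ e' := by rw [← Set.mem_singleton_iff.1 h]; exact Sym2.mem_mk_left u w
      rcases (hmem_e' u).1 this with h1 | h1
      · exact absurd h1 (huv.trans hvp).ne
      · exact absurd h1 ((huv.trans hvp).trans hpq).ne
  · -- s(w,x) ≠ e' : swap inside M
    have hpw : p < w := by
      rcases (hmvM w hwmv).lt_or_eq with h | h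
      · exact h
      · exact absurd (Sym2.mem_mk_left w x)
          (hM.1.2 e' he'M _ hwxM (Ne.symm hwxe') w ((hmem_e' w).2 (Or.inl h.symm)))
    have hpx : p < x := by
      rcases (hmvM x hxmv).lt_or_eq with h | h
      · exact h
      · exact absurd (Sym2.mem_mk_right w x)
          (hM.1.2 e' he'M _ hwxM (Ne.symm hwxe') x ((hmem_e' x).2 (Or.inl h.symm)))
    have hwq : w ≠ q := by
      intro h
      exact hM.1.2 e' he'M _ hwxM (Ne.symm hwxe') q ((hmem_e' q).2 (Or.inr rfl))
        (Sym2.mem_iff.2 (Or.inl h.symm))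
    have hxq : x ≠ q := by
      intro h
      exact hM.1.2 e' he'M _ hwxM (Ne.symm hwxe') q ((hmem_e' q).2 (Or.inr rfl))
        (Sym2.mem_iff.2 (Or.inr h.symm))
    have hApq : G.Adj p q := by
      have := adj_of_edge he'E
      rw [hp, hq]; exact this
    have hApw : G.Adj p w := (hord u p w (huv.trans hvp) hpw huw).2
    have hApx : G.Adj p x := (hord v p x hvp hpx hAvx).2
    have hAqw : G.Adj q w := by
      rcases lt_or_gt_of_ne hwq with h | h
      · exact ((hord p w q hpw h hApq).2).symm
      · exact (hord p q w hpq h hApw).2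
    have hne_px_wq : ∀ z, z ∈ s(p, x) → z ∉ s(w, q) := by
      intro z hz hz'
      rcases Sym2.mem_iff.1 hz with rfl | rfl <;> rcases Sym2.mem_iff.1 hz' with h | h
      · exact hpw.ne h
      · exact hpq.ne h
      · exact hwx h.symm
      · exact hxq h
    have hcov2 : ∀ z : V, (z ∈ s(p, x) ∨ z ∈ s(w, q)) ↔ (z ∈ e' ∨ z ∈ s(w, x)) := by
      intro z
      rw [hmem_e' z]
      simp only [Sym2.mem_iff]
      tauto
    obtain ⟨hm3, hv3⟩ := swap_matching hM.1 he'M hwxM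
      (G.mem_edgeSet.mpr hApx) (G.mem_edgeSet.mpr hAqw.symm)
      hne_px_wq hcov2
    have hMt : (M \ {e', s(w, x)}) ∪ {s(p, x), s(w, q)} = M := hM.2 _ hm3 hv3
    have hpxM : s(p, x) ∈ M := by
      rw [← hMt]; exact Set.mem_union_right _ (Set.mem_insert _ _)
    have hpxe' : s(p, x) ≠ e' := by
      intro h
      have : q ∈ s(p, x) := by rw [h]; exact (hmem_e' q).2 (Or.inr rfl)
      rcases Sym2.mem_iff.1 this with h1 | h1
      · exact hpq.ne' h1
      · exact hxq h1.symm
    exact hM.1.2 _ hpxM e' he'M hpxe' p (Sym2.mem_mk_left p x) ((hmem_e' p).2 (Or.inl rfl))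
end

section
/- Let G be a triangle-free finite simple graph with a transitive vertex ordering < and let e, e' be edges of G with l(e) < l(e'). If r(e') < r(e), then {e, e'} is not a uniquely restricted matching in G. -/
lemma edge_eq_mk {V : Type*} [LinearOrder V] (e : Sym2 V) : e = s(eL e, eR e) := by
  induction e using Sym2.ind with
  | _ x y =>
    simp only [eL, eR, Sym2.lift_mk]
    rcases le_total x y with h | h
    · simp [min_eq_left h, max_eq_right h]
    · rw [Sym2.eq_swap]; simp [min_eq_right h, max_eq_left h]

lemma eL_lt_eR {V : Type*} [LinearOrder V] {G : SimpleGraph V} {e : Sym2 V}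
    (he : e ∈ G.edgeSet) : eL e < eR e := by
  induction e using Sym2.ind with
  | _ x y =>
    simp only [eL, eR, Sym2.lift_mk]
    exact min_lt_max.mpr (G.ne_of_adj ((SimpleGraph.mem_edgeSet G).mp he))

lemma aux_main {V : Type*} [LinearOrder V] (G : SimpleGraph V)
    (htf : G.CliqueFree 3) (hord : IsTransitiveOrdering G)
    (a b c d : V) (hab : G.Adj a b) (hcd : G.Adj c d)
    (h1 : a < c) (h2 : c < d) (h3 : d < b) :
    ¬ UniquelyRestricted G {s(a,b), s(c,d)} := by
  have nac : a ≠ c := h1.ne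
  have nad : a ≠ d := (h1.trans h2).ne
  have nab : a ≠ b := (h1.trans (h2.trans h3)).ne
  have ncd : c ≠ d := h2.ne
  have ncb : c ≠ b := (h2.trans h3).ne
  have ndb : d ≠ b := h3.ne
  have tri : ∀ u v w : V, G.Adj u v → G.Adj u w → G.Adj v w → False := by
    intro u v w huv huw hvw
    exact htf {u, v, w} (SimpleGraph.is3Clique_triple_iff.mpr ⟨huv, huw, hvw⟩)
  rintro ⟨hM, hun⟩
  have hacb : G.Adj a c ∨ G.Adj c b := (hord a c b h1 (h2.trans h3)).2 hab
  have hadb : G.Adj a d ∨ G.Adj d b := (hord a d b (h1.trans h2) h3).2 hab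
  have key : (G.Adj a c ∧ G.Adj d b) ∨ (G.Adj a d ∧ G.Adj c b) := by
    rcases hacb with hac | hcb
    · rcases hadb with had | hdb
      · exact absurd hcd (fun h => tri a c d hac had h)
      · exact Or.inl ⟨hac, hdb⟩
    · rcases hadb with had | hdb
      · exact Or.inr ⟨had, hcb⟩
      · exact absurd hcd (fun h => tri c d b h hcb hdb)
  have step : ∀ p q r t : V, G.Adj p q → G.Adj r t →
      (∀ v, (v = p ∨ v = q) ∨ (v = r ∨ v = t) ↔ (v = a ∨ v = b) ∨ (v = c ∨ v = d)) →
      p ≠ q → p ≠ r → p ≠ t → q ≠ r → q ≠ t → r ≠ t →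
      s(p, q) ≠ s(a, b) → s(p, q) ≠ s(c, d) → False := by
    intro p q r t hpq hrt hvs n1 n2 n3 n4 n5 n6 hx1 hx2
    have hmatch : IsMatchingSet G {s(p, q), s(r, t)} := by
      constructor
      · rintro f (rfl | rfl)
        · exact hpq
        · exact hrt
      · have disj : ∀ v, v ∈ s(p, q) → v ∉ s(r, t) := by
          intro v hv hv'
          rw [Sym2.mem_iff] at hv hv'
          rcases hv with rfl | rfl <;> rcases hv' with h | h <;>
            first | exact n2 h | exact n3 h | exact n4 h | exact n5 h
        rintro f (rfl | rfl) g (rfl | rfl) hfg v hv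
        · exact absurd rfl hfg
        · exact disj v hv
        · exact fun hv' => disj v hv' hv
        · exact absurd rfl hfg
    have hmv : matchedVerts {s(p, q), s(r, t)} = matchedVerts {s(a, b), s(c, d)} := by
      ext v
      simp only [matchedVerts, Set.mem_setOf_eq, Set.mem_insert_iff, Set.mem_singleton_iff,
        exists_eq_or_imp, exists_eq_left, Sym2.mem_iff]
      exact hvs v
    have heq := hun _ hmatch hmv
    have : s(p, q) ∈ ({s(a, b), s(c, d)} : Set (Sym2 V)) := by
      rw [← heq]; left; rfl
    rcases this with h | h
    · exact hx1 h
    · exact hx2 h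
  rcases key with ⟨hac, hdb⟩ | ⟨had, hcb⟩
  · refine step a c d b hac hdb (fun v => by tauto) nac nad nab ncd ncb ndb ?_ ?_ <;>
      · intro h; rw [Sym2.eq_iff] at h
        rcases h with ⟨ha, hb⟩ | ⟨ha, hb⟩ <;> simp_all
  · refine step a d c b had hcb (fun v => by tauto) nad nac nab ncd.symm ndb ncb ?_ ?_ <;>
      · intro h; rw [Sym2.eq_iff] at h
        rcases h with ⟨ha, hb⟩ | ⟨ha, hb⟩ <;> simp_all

theorem stmt13 {V : Type*} [Fintype V] [LinearOrder V] (G : SimpleGraph V)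
    (htf : G.CliqueFree 3) (hord : IsTransitiveOrdering G) (e e' : Sym2 V)
    (he : e ∈ G.edgeSet) (he' : e' ∈ G.edgeSet)
    (hll : eL e < eL e') (hrr : eR e' < eR e) :
    ¬ UniquelyRestricted G {e, e'} := by
  have h1 := eL_lt_eR he
  have h2 := eL_lt_eR he'
  have hab : G.Adj (eL e) (eR e) := by
    rw [edge_eq_mk e] at he; exact (SimpleGraph.mem_edgeSet G).mp he
  have hcd : G.Adj (eL e') (eR e') := by
    rw [edge_eq_mk e'] at he'; exact (SimpleGraph.mem_edgeSet G).mp he'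
  have := aux_main G htf hord (eL e) (eR e) (eL e') (eR e') hab hcd hll h2 hrr
  rwa [← edge_eq_mk e, ← edge_eq_mk e'] at this
end
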